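/- Let x0 ≥ 1 and f : [x0, ∞) → ℝ be twice continuously differentiable with f, f', f'' > 0 and f''(x)/2 ≤ f''(y) ≤ f''(x) for x0 ≤ x ≤ y ≤ 2x. Let λ, r, T ≥ 0 be integers, A ≥ 2x0, and a ≤ b integers with [a,b) ⊆ [A, 2A]. Then the number of integers n ∈ [a,b) such that s(⌊f(n+ℓ)⌋) − s(⌊f(n+ℓ+r)⌋) ≠ s_λ(⌊f(n+ℓ)⌋) − s_λ(⌊f(n+ℓ+r)⌋) for some ℓ ∈ {0,…,T−1} is O((r+T)·((b−a)·f'(A)·2^{−λ} + 1)), with an absolute implied constant. -/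

import Mathlib

/-- The binary sum-of-digits function. -/
def binDigitSum (n : ℕ) : ℕ := (Nat.digits 2 n).sum

/-- The truncated binary sum-of-digits function. -/
def truncDigitSum (lam : ℕ) (n : ℕ) : ℕ := binDigitSum (n % 2 ^ lam)

/-!
Write `F n = ⌊f n⌋ / 2^λ`. Since `s m = s_λ m + s (m / 2^λ)`, an exceptional `n` forces
`F (n + ℓ) < F (n + ℓ + r)`, hence `F n < F (n + R)` with `R = r + T`, by monotonicity of `F`.
Along a residue class modulo `R` such jumps of `F` happen at most `F (b + R) - F a` times. If
`b - a ≤ R` the trivial bound suffices; otherwise `[a, b + R] ⊆ [A, 4A]`, where the regularity of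
`f''` gives `f' ≤ 7 f'(A)`, so the mean value theorem bounds `F (b + R) - F a` by
`14 (b - a) f'(A) / 2^λ + 1`.
-/

open Finset

theorem Nat.digits_sum_eq_mod_add_div {b : ℕ} (hb : 1 < b) (k m : ℕ) :
    (b.digits m).sum = (b.digits (m % b ^ k)).sum + (b.digits (m / b ^ k)).sum := by
  rcases (m / b ^ k).eq_zero_or_pos with hq | hq
  · rw [hq, Nat.mod_eq_of_lt ((Nat.div_eq_zero_iff_lt (by positivity)).1 hq)]
    simp
  obtain ⟨j, hj⟩ := Nat.exists_eq_add_of_le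
    ((Nat.digits_length_le_iff hb _).2 (Nat.mod_lt m (by positivity : 0 < b ^ k)))
  have h := Nat.digits_append_zeroes_append_digits (k := j) (n := m % b ^ k) hb hq
  rw [← hj, Nat.mod_add_div] at h
  simp [← h]

lemma binDigitSum_eq_truncDigitSum_add (lam m : ℕ) :
    binDigitSum m = truncDigitSum lam m + binDigitSum (m / 2 ^ lam) :=
  Nat.digits_sum_eq_mod_add_div one_lt_two lam m

lemma binDigitSum_sub_eq_truncDigitSum_sub {lam m m' : ℕ} (h : m / 2 ^ lam = m' / 2 ^ lam) :
    (binDigitSum m : ℤ) - binDigitSum m' = (truncDigitSum lam m : ℤ) - truncDigitSum lam m' := by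
  rw [binDigitSum_eq_truncDigitSum_add lam m, binDigitSum_eq_truncDigitSum_add lam m', h]
  push_cast
  ring

lemma div_lt_div_of_binDigitSum_sub_ne {lam m m' : ℕ} (hmm' : m ≤ m')
    (h : (binDigitSum m : ℤ) - binDigitSum m' ≠ (truncDigitSum lam m : ℤ) - truncDigitSum lam m') :
    m / 2 ^ lam < m' / 2 ^ lam :=
  (Nat.div_le_div_right hmm').lt_of_ne fun heq => h (binDigitSum_sub_eq_truncDigitSum_sub heq)

/-- Along each residue class mod `R`, the values of `g` at the counted points strictly increase,
so `n ↦ (n % R, g n)` is injective on them. -/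
lemma card_filter_lt_add_le {g : ℕ → ℕ} {a : ℕ} (hg : MonotoneOn g (Set.Ici a)) (b R : ℕ) :
    #{n ∈ Ico a b | g n < g (n + R)} ≤ R * (g (b + R) - g a) := by
  rcases R.eq_zero_or_pos with rfl | hR
  · simp
  set S := {n ∈ Ico a b | g n < g (n + R)}
  have hS : ∀ n ∈ S, a ≤ n ∧ n < b ∧ g n < g (n + R) := fun n hn => by
    simpa only [S, mem_filter, mem_Ico, and_assoc] using hn
  have hinc : ∀ n ∈ S, ∀ n' ∈ S, n ≡ n' [MOD R] → n < n' → g n < g n' :=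
    fun n hn n' hn' hmod hlt => (hS n hn).2.2.trans_le <|
      hg (Set.mem_Ici.2 (by linarith [(hS n hn).1])) (Set.mem_Ici.2 (hS n' hn').1)
        (hmod.add_le_of_lt hlt)
  calc #S ≤ #(range R ×ˢ Ico (g a) (g (b + R))) := by
        refine card_le_card_of_injOn (fun n => (n % R, g n)) (fun n hn => ?_)
          fun n hn n' hn' h => ?_
        · obtain ⟨han, hnb, hlt⟩ := hS n hn
          simp only [coe_product, coe_range, coe_Ico, Set.mem_prod, Set.mem_Iio, Set.mem_Ico]
          exact ⟨Nat.mod_lt n hR, hg Set.self_mem_Ici (Set.mem_Ici.2 han) han,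
            hlt.trans_le (hg (Set.mem_Ici.2 (by omega)) (Set.mem_Ici.2 (by omega)) (by omega))⟩
        · simp only [Prod.mk.injEq] at h
          rcases lt_trichotomy n n' with hlt | heq | hgt
          · exact absurd h.2 (hinc n hn n' hn' h.1 hlt).ne
          · exact heq
          · exact absurd h.2 (hinc n' hn' n hn h.1.symm hgt).ne'
    _ = R * (g (b + R) - g a) := by simp

lemma card_filter_binDigitSum_sub_ne_le {G : ℕ → ℕ} {a : ℕ} (hG : MonotoneOn G (Set.Ici a))
    (lam r T b : ℕ) :
    #{n ∈ Ico a b | ∃ ℓ < T, (binDigitSum (G (n + ℓ)) : ℤ) - binDigitSum (G (n + ℓ + r)) ≠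
        (truncDigitSum lam (G (n + ℓ)) : ℤ) - truncDigitSum lam (G (n + ℓ + r))} ≤
      (r + T) * (G (b + (r + T)) / 2 ^ lam - G a / 2 ^ lam) := by
  have hG' : MonotoneOn (fun n => G n / 2 ^ lam) (Set.Ici a) := fun m hm n hn hmn =>
    Nat.div_le_div_right (hG hm hn hmn)
  refine (card_le_card fun n hn => ?_).trans (card_filter_lt_add_le hG' b (r + T))
  simp only [mem_filter, mem_Ico] at hn ⊢
  obtain ⟨⟨han, hnb⟩, ℓ, hℓ, hne⟩ := hn
  refine ⟨⟨han, hnb⟩, ?_⟩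
  calc G n / 2 ^ lam ≤ G (n + ℓ) / 2 ^ lam := hG' han (by simp; omega) (by omega)
    _ < G (n + ℓ + r) / 2 ^ lam :=
        div_lt_div_of_binDigitSum_sub_ne (hG (by simp; omega) (by simp; omega) (by omega)) hne
    _ ≤ G (n + (r + T)) / 2 ^ lam := hG' (by simp; omega) (by simp; omega) (by omega)

lemma sub_le_mul_sub_of_hasDerivAt_le {g g' : ℝ → ℝ} {u v C : ℝ} (huv : u ≤ v)
    (hg : ∀ x ∈ Set.Icc u v, HasDerivAt g (g' x) x) (hC : ∀ x ∈ Set.Icc u v, g' x ≤ C) :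
    g v - g u ≤ C * (v - u) :=
  (convex_Icc u v).image_sub_le_mul_sub_of_deriv_le
    (fun x hx => (hg x hx).continuousAt.continuousWithinAt)
    (fun x hx => (hg x (interior_subset hx)).differentiableAt.differentiableWithinAt)
    (fun x hx => (hg x (interior_subset hx)).deriv ▸ hC x (interior_subset hx))
    u (Set.left_mem_Icc.2 huv) v (Set.right_mem_Icc.2 huv) huv

lemma mul_sub_le_sub_of_le_hasDerivAt {g g' : ℝ → ℝ} {u v C : ℝ} (huv : u ≤ v)
    (hg : ∀ x ∈ Set.Icc u v, HasDerivAt g (g' x) x) (hC : ∀ x ∈ Set.Icc u v, C ≤ g' x) :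
    C * (v - u) ≤ g v - g u :=
  (convex_Icc u v).mul_sub_le_image_sub_of_le_deriv
    (fun x hx => (hg x hx).continuousAt.continuousWithinAt)
    (fun x hx => (hg x (interior_subset hx)).differentiableAt.differentiableWithinAt)
    (fun x hx => (hg x (interior_subset hx)).deriv ▸ hC x (interior_subset hx))
    u (Set.left_mem_Icc.2 huv) v (Set.right_mem_Icc.2 huv) huv

lemma apply_le_of_mem_Icc_four_mul {g : ℝ → ℝ} {x0 A y : ℝ}
    (hg : ∀ x y, x0 ≤ x → x ≤ y → y ≤ 2 * x → g y ≤ g x) (hA : x0 ≤ A)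
    (hy : y ∈ Set.Icc A (4 * A)) : g y ≤ g A := by
  obtain ⟨hAy, hy4A⟩ := hy
  rcases le_or_gt y (2 * A) with hy2A | hy2A
  · exact hg A y hA hAy hy2A
  · exact (hg (2 * A) y (by linarith) hy2A.le (by linarith)).trans
      (hg A (2 * A) hA (by linarith) le_rfl)

/-- `A f''(A) / 2 ≤ f'(A) - f'(A/2) ≤ f'(A)`, so `f'` grows by at most `3A f''(A) ≤ 6 f'(A)`
on `[A, 4A]`. -/
lemma deriv_le_seven_mul {x0 A x : ℝ} {f' f'' : ℝ → ℝ}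
    (hf' : ∀ x ∈ Set.Ici x0, HasDerivAt f' (f'' x) x)
    (hf'_nonneg : ∀ x ∈ Set.Ici x0, 0 ≤ f' x) (hf''_nonneg : ∀ x ∈ Set.Ici x0, 0 ≤ f'' x)
    (hf''_le : ∀ x y, x0 ≤ x → x ≤ y → y ≤ 2 * x → f'' y ≤ f'' x)
    (hA : 2 * x0 ≤ A) (hx : x ∈ Set.Icc A (4 * A)) : f' x ≤ 7 * f' A := by
  have hA0 : 0 ≤ A := by linarith [hx.1, hx.2]
  have hslope : A * f'' A ≤ 2 * f' A := by
    have h := mul_sub_le_sub_of_le_hasDerivAt (by linarith : A / 2 ≤ A)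
      (fun y hy => hf' y (Set.mem_Ici.2 (by linarith [hy.1])))
      (fun y hy => hf''_le y A (by linarith [hy.1]) hy.2 (by linarith [hy.1]))
    linarith [hf'_nonneg (A / 2) (Set.mem_Ici.2 (by linarith))]
  have hgrowth := sub_le_mul_sub_of_hasDerivAt_le hx.1
    (fun y hy => hf' y (Set.mem_Ici.2 (by linarith [hy.1])))
    (fun y hy => apply_le_of_mem_Icc_four_mul hf''_le (by linarith) ⟨hy.1, hy.2.trans hx.2⟩)
  nlinarith [hf''_nonneg A (Set.mem_Ici.2 (by linarith)), hx.2]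

lemma sub_le_seven_mul_deriv_mul_sub {x0 A u v : ℝ} {f f' f'' : ℝ → ℝ}
    (hf : ∀ x ∈ Set.Ici x0, HasDerivAt f (f' x) x)
    (hf' : ∀ x ∈ Set.Ici x0, HasDerivAt f' (f'' x) x)
    (hf'_nonneg : ∀ x ∈ Set.Ici x0, 0 ≤ f' x) (hf''_nonneg : ∀ x ∈ Set.Ici x0, 0 ≤ f'' x)
    (hf''_le : ∀ x y, x0 ≤ x → x ≤ y → y ≤ 2 * x → f'' y ≤ f'' x)
    (hA : 2 * x0 ≤ A) (hAu : A ≤ u) (huv : u ≤ v) (hv : v ≤ 4 * A) :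
    f v - f u ≤ 7 * f' A * (v - u) :=
  sub_le_mul_sub_of_hasDerivAt_le huv
    (fun y hy => hf y (Set.mem_Ici.2 (by linarith [hy.1])))
    (fun y hy => deriv_le_seven_mul hf' hf'_nonneg hf''_nonneg hf''_le hA
      ⟨hAu.trans hy.1, hy.2.trans hv⟩)

lemma natFloor_div_sub_natFloor_div_le {x y : ℝ} (hy : 0 ≤ y) (d : ℕ) :
    ((⌊y⌋₊ / d : ℕ) : ℝ) - (⌊x⌋₊ / d : ℕ) ≤ (y - x) / d + 1 := by
  rw [← Nat.floor_div_natCast, ← Nat.floor_div_natCast, sub_div]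
  linarith [Nat.floor_le (div_nonneg hy d.cast_nonneg), Nat.lt_floor_add_one (x / d)]

lemma monotoneOn_Ici_of_hasDerivAt_nonneg {f f' : ℝ → ℝ} {x0 : ℝ}
    (hf : ∀ x ∈ Set.Ici x0, HasDerivAt f (f' x) x) (hf' : ∀ x ∈ Set.Ici x0, 0 ≤ f' x) :
    MonotoneOn f (Set.Ici x0) :=
  monotoneOn_of_hasDerivWithinAt_nonneg (convex_Ici x0)
    (fun x hx => (hf x hx).continuousAt.continuousWithinAt)
    (fun x hx => (hf x (interior_subset hx)).hasDerivWithinAt)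
    (fun x hx => hf' x (interior_subset hx))

lemma MonotoneOn.natFloor_comp_natCast {f : ℝ → ℝ} {x0 : ℝ} (hf : MonotoneOn f (Set.Ici x0))
    {a : ℕ} (ha : x0 ≤ a) : MonotoneOn (fun n : ℕ => ⌊f n⌋₊) (Set.Ici a) :=
  fun _ hm _ hn hmn => Nat.floor_le_floor <|
    hf (ha.trans (Nat.cast_le.2 hm)) (ha.trans (Nat.cast_le.2 hn)) (Nat.cast_le.2 hmn)

lemma natFloor_div_sub_natFloor_div_le_seven_mul {x0 A u v : ℝ} {f f' f'' : ℝ → ℝ}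
    (hf : ∀ x ∈ Set.Ici x0, HasDerivAt f (f' x) x)
    (hf' : ∀ x ∈ Set.Ici x0, HasDerivAt f' (f'' x) x)
    (hf_nonneg : ∀ x ∈ Set.Ici x0, 0 ≤ f x)
    (hf'_nonneg : ∀ x ∈ Set.Ici x0, 0 ≤ f' x) (hf''_nonneg : ∀ x ∈ Set.Ici x0, 0 ≤ f'' x)
    (hf''_le : ∀ x y, x0 ≤ x → x ≤ y → y ≤ 2 * x → f'' y ≤ f'' x)
    (hA : 2 * x0 ≤ A) (hAu : A ≤ u) (huv : u ≤ v) (hv : v ≤ 4 * A) (d : ℕ) :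
    ((⌊f v⌋₊ / d : ℕ) : ℝ) - (⌊f u⌋₊ / d : ℕ) ≤ 7 * f' A * (v - u) / d + 1 :=
  (natFloor_div_sub_natFloor_div_le (hf_nonneg v (by simp; linarith)) d).trans <| by
    gcongr
    exact sub_le_seven_mul_deriv_mul_sub hf hf' hf'_nonneg hf''_nonneg hf''_le hA hAu huv hv

theorem stmt_10 :
    ∃ C : ℝ, 0 < C ∧
      ∀ (x0 : ℝ) (f f' f'' : ℝ → ℝ) (lam r T A a b : ℕ),
        1 ≤ x0 →
        (∀ x ∈ Set.Ici x0, HasDerivAt f (f' x) x) →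
        (∀ x ∈ Set.Ici x0, HasDerivAt f' (f'' x) x) →
        ContinuousOn f'' (Set.Ici x0) →
        (∀ x ∈ Set.Ici x0, 0 < f x ∧ 0 < f' x ∧ 0 < f'' x) →
        (∀ x y : ℝ, x0 ≤ x → x ≤ y → y ≤ 2 * x → f'' x / 2 ≤ f'' y ∧ f'' y ≤ f'' x) →
        2 * x0 ≤ (A : ℝ) →
        a ≤ b → (A : ℝ) ≤ a → (b : ℝ) ≤ 2 * A + 1 →
        (((Finset.Ico a b).filter (fun n : ℕ => ∃ ℓ < T,
            (binDigitSum (Nat.floor (f ((n + ℓ : ℕ) : ℝ))) : ℤ) - binDigitSum (Nat.floor (f ((n + ℓ + r : ℕ) : ℝ))) ≠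
              (truncDigitSum lam (Nat.floor (f ((n + ℓ : ℕ) : ℝ))) : ℤ) -
                truncDigitSum lam (Nat.floor (f ((n + ℓ + r : ℕ) : ℝ))))).card : ℝ) ≤
          C * ((r + T) * ((b - a : ℝ) * f' A / 2 ^ lam + 1)) := by
  refine ⟨14, by norm_num, ?_⟩
  intro x0 f f' f'' lam r T A a b hx0 hf hf' _ hpos hreg hA hab hAa hbA
  have hf'_nonneg : ∀ x ∈ Set.Ici x0, 0 ≤ f' x := fun x hx => (hpos x hx).2.1.le
  have hf'A := hf'_nonneg A (by simp; linarith)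
  have hX : 0 ≤ (b - a : ℝ) * f' A / 2 ^ lam := by
    have : (a : ℝ) ≤ b := by exact_mod_cast hab
    positivity
  rcases le_or_gt b (a + (r + T)) with hsmall | hlarge
  · calc _ ≤ (#(Ico a b) : ℝ) := Nat.cast_le.2 (card_filter_le _ _)
      _ ≤ r + T := by rw [Nat.card_Ico]; exact_mod_cast (by omega : b - a ≤ r + T)
      _ ≤ 14 * ((r + T) * ((b - a : ℝ) * f' A / 2 ^ lam + 1)) := by nlinarith
  have hlarge' : (a : ℝ) + (r + T) + 1 ≤ b := by exact_mod_cast hlarge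
  have hfloor := (monotoneOn_Ici_of_hasDerivAt_nonneg hf hf'_nonneg).natFloor_comp_natCast
    (by linarith : x0 ≤ a)
  have hcount := card_filter_binDigitSum_sub_ne_le hfloor lam r T b
  rw [← Nat.cast_le (α := ℝ), Nat.cast_mul,
    Nat.cast_sub (Nat.div_le_div_right (hfloor (by simp) (by simp; omega) (by omega)))] at hcount
  have hjump := natFloor_div_sub_natFloor_div_le_seven_mul (u := a) (v := (b + (r + T) : ℕ))
    hf hf' (fun x hx => (hpos x hx).1.le) hf'_nonneg (fun x hx => (hpos x hx).2.2.le)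
    (fun x y h1 h2 h3 => (hreg x y h1 h2 h3).2) hA hAa
    (by exact_mod_cast (by omega : a ≤ b + (r + T))) (by push_cast; linarith) (2 ^ lam)
  beta_reduce at hcount
  calc _ ≤ _ := hcount
    _ ≤ ((r + T : ℕ) : ℝ) * (14 * ((b - a : ℝ) * f' A / 2 ^ lam) + 1) := by
      gcongr
      rw [show 14 * ((b - a : ℝ) * f' A / 2 ^ lam) = 7 * f' A * (2 * (b - a)) / (2 ^ lam : ℕ) by
        push_cast; ring]
      exact hjump.trans (by gcongr; push_cast; linarith)
    _ ≤ 14 * ((r + T) * ((b - a : ℝ) * f' A / 2 ^ lam + 1)) := by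
      push_cast
      nlinarith
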